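/- arXiv:1002.2388 — 2 statements merged into one kernel-verified Lean document; each statement's English description precedes it below -/
import Mathlib

section
/- For the ideal I = (X_1, X_2)D of D, the intersection of all fractional ideals J ∈ 𝒥 containing I equals M; that is, I^∗ = M, where E^∗ := ⋂{J ∈ 𝒥 : E ⊆ J}. -/
open MvPolynomial FractionalIdeal

noncomputable section

variable (k : Type*) [Field k]

/-- The ideal `N = (X_1, X_2, ...)` of `R = k[X_1, X_2, ...]` generated by all the
indeterminates. -/
def bigN : Ideal (MvPolynomial ℕ k) := Ideal.span (Set.range MvPolynomial.X)

theorem bigN_eq_ker : bigN k = RingHom.ker (constantCoeff (σ := ℕ) (R := k)) := by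
  ext p
  rw [bigN, ← Set.image_univ, mem_ideal_span_X_image, RingHom.mem_ker]
  constructor
  · intro h
    rw [constantCoeff_eq]
    by_contra hc
    obtain ⟨i, _, hi⟩ := h 0 (mem_support_iff.mpr hc)
    simp at hi
  · intro h m hm
    rw [constantCoeff_eq] at h
    have hm0 : m ≠ 0 := by rintro rfl; exact mem_support_iff.mp hm h
    obtain ⟨i, hi⟩ := Finsupp.ne_iff.mp hm0
    exact ⟨i, trivial, by simpa using hi⟩

instance : (bigN k).IsMaximal := by
  rw [bigN_eq_ker]
  exact RingHom.ker_isMaximal_of_surjective _ (fun a => ⟨C a, by simp⟩)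

/-- `D`, the localization of `k[X_1, X_2, ...]` at the maximal ideal `N`. -/
abbrev bigD := Localization.AtPrime (bigN k)

/-- `K`, the fraction field of `D`. -/
abbrev bigK := FractionRing (bigD k)

attribute [local instance high] Algebra.toModule

/-- `M`, the maximal ideal of the local domain `D`. -/
def bigM : Ideal (bigD k) := IsLocalRing.maximalIdeal (bigD k)

/-- The maximal ideal `M` of `D`, viewed as a fractional ideal of `D`. -/
def bigMF : FractionalIdeal (nonZeroDivisors (bigD k)) (bigK k) :=
  ((bigM k : Ideal (bigD k)) : FractionalIdeal (nonZeroDivisors (bigD k)) (bigK k))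

/-- The set `𝒥` of all fractional ideals of `D` of the form `xD`, `yM` or `zM²`, with
`x, y, z` nonzero elements of `K` (viewed as `D`-submodules of `K`). -/
def Jset : Set (Submodule (bigD k) (bigK k)) :=
  {J | ∃ x : bigK k, x ≠ 0 ∧
    (J = Submodule.span (bigD k) {x} ∨
     J = Submodule.span (bigD k) {x} * (bigMF k : Submodule (bigD k) (bigK k)) ∨
     J = Submodule.span (bigD k) {x} * (bigMF k : Submodule (bigD k) (bigK k)) ^ 2)}

/-- The operation `E^∗ := ⋂ {J ∈ 𝒥 : E ⊆ J}`. -/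
def starJ (E : Submodule (bigD k) (bigK k)) : Submodule (bigD k) (bigK k) :=
  sInf {J | J ∈ Jset k ∧ E ≤ J}

/-! If `(X₁, X₂) ⊆ x M^n` with `n ≤ 2`, then `X₁, X₂ ∈ xD`; as `X₁` is a prime of `D` not dividing
`X₂`, this forces `x⁻¹ ∈ D`. Then `M ⊆ x M^n` amounts to `x⁻¹ M ⊆ M^n`, which is clear for
`n ≤ 1`; for `n = 2`, `x⁻¹ X₁ ∈ M²` while `X₁ ∉ M²`, so `x⁻¹ ∈ M`. Hence the members of `𝒥`
containing `(X₁, X₂)` are exactly those containing `M`, and `M` is the least of them. -/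

open IsLocalRing IsLocalization Submodule

theorem Submodule.mem_span_singleton_mul_iff_of_mul_eq_one {R A : Type*} [CommSemiring R]
    [CommSemiring A] [Algebra R A] {P : Submodule R A} {c x y : A} (hcx : c * x = 1) :
    y ∈ span R {x} * P ↔ c * y ∈ P := by
  rw [mem_span_singleton_mul]
  constructor
  · rintro ⟨z, hz, rfl⟩
    rwa [← mul_assoc, hcx, one_mul]
  · exact fun h ↦ ⟨c * y, h, by rw [← mul_assoc, mul_comm x, hcx, one_mul]⟩

theorem IsLocalization.algebraMap_dvd_algebraMap_iff_of_prime {R : Type*} [CommRing R]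
    {M : Submonoid R} (S : Type*) [CommRing S] [Algebra R S] [IsLocalization M S] {p : R}
    (hp : Prime p) (hM : Disjoint (M : Set R) (Ideal.span {p})) (r : R) :
    algebraMap R S p ∣ algebraMap R S r ↔ p ∣ r := by
  have hprime := (Ideal.span_singleton_prime hp.ne_zero).2 hp
  rw [← Ideal.mem_span_singleton, ← Set.image_singleton, ← Ideal.map_span, ← Ideal.mem_comap,
    ← Ideal.under_def, under_map_of_isPrime_disjoint M S hprime hM, Ideal.mem_span_singleton]

theorem IsLocalization.prime_algebraMap_of_prime {R : Type*} [CommRing R] [IsDomain R]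
    {M : Submonoid R} (S : Type*) [CommRing S] [Algebra R S] [IsLocalization M S] {p : R}
    (hp : Prime p) (hM : Disjoint (M : Set R) (Ideal.span {p})) :
    Prime (algebraMap R S p) := by
  have hM0 : (0 : R) ∉ M := fun h ↦ Set.disjoint_left.1 hM h (Ideal.zero_mem _)
  have hp0 : algebraMap R S p ≠ 0 :=
    (map_ne_zero_iff _ (IsLocalization.injective S (le_nonZeroDivisors_of_noZeroDivisors hM0))).2
      hp.ne_zero
  have hprime := IsLocalization.isPrime_of_isPrime_disjoint M S _
    ((Ideal.span_singleton_prime hp.ne_zero).2 hp) hM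
  rw [Ideal.map_span, Set.image_singleton] at hprime
  exact (Ideal.span_singleton_prime hp0).1 hprime

section

variable {D : Type*} [CommRing D] [IsLocalRing D]

theorem IsLocalRing.mul_mem_maximalIdeal_pow {a c m : D} {n : ℕ} (hn : n ≤ 2)
    (ha : a ∉ maximalIdeal D ^ 2) (hca : c * a ∈ maximalIdeal D ^ n) (hm : m ∈ maximalIdeal D) :
    c * m ∈ maximalIdeal D ^ n := by
  by_cases hc : c ∈ maximalIdeal D
  · exact Ideal.pow_le_pow_right hn (sq (maximalIdeal D) ▸ Ideal.mul_mem_mul hc hm)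
  · have ha' : a ∈ maximalIdeal D ^ n :=
      (Ideal.unit_mul_mem_iff_mem _ (notMem_maximalIdeal.1 hc)).1 hca
    have hn1 : n ≤ 1 := by
      by_contra h
      exact ha (Ideal.pow_le_pow_right (by omega) ha')
    exact Ideal.pow_le_pow_right hn1 ((pow_one (maximalIdeal D)).symm ▸ Ideal.mul_mem_left _ c hm)

end

section

variable {D K : Type*} [CommRing D] [Field K] [Algebra D K] [IsFractionRing D K]

theorem IsFractionRing.algebraMap_mem_coeSubmodule_iff {I : Ideal D} {d : D} :
    algebraMap D K d ∈ coeSubmodule K I ↔ d ∈ I := by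
  refine ⟨fun h ↦ ?_, fun h ↦ (mem_coeSubmodule K I).2 ⟨d, h, rfl⟩⟩
  obtain ⟨y, hy, hyd⟩ := (mem_coeSubmodule K I).1 h
  rwa [← IsFractionRing.injective D K hyd]

theorem exists_mul_eq_one_of_mem_span_singleton {a b : D} (ha : Prime a) (hab : ¬ a ∣ b)
    {x : K} (hxa : algebraMap D K a ∈ span D {x}) (hxb : algebraMap D K b ∈ span D {x}) :
    ∃ c : D, algebraMap D K c * x = 1 := by
  obtain ⟨α, hα⟩ := mem_span_singleton.1 hxa
  obtain ⟨β, hβ⟩ := mem_span_singleton.1 hxb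
  rw [Algebra.smul_def] at hα hβ
  have hαb : a ∣ α * b :=
    ⟨β, IsFractionRing.injective D K (by simp only [map_mul, ← hα, ← hβ]; ring)⟩
  obtain ⟨c, rfl⟩ := (ha.dvd_or_dvd hαb).resolve_right hab
  refine ⟨c, mul_left_cancel₀ ((map_ne_zero_iff _ (IsFractionRing.injective D K)).2 ha.ne_zero) ?_⟩
  rw [mul_one, ← mul_assoc, ← map_mul, hα]

variable [IsLocalRing D]

theorem coeSubmodule_span_pair_le_iff_maximalIdeal_le {a b : D} (ha : Prime a) (hab : ¬ a ∣ b)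
    (ha2 : a ∉ maximalIdeal D ^ 2) (hb : b ∈ maximalIdeal D) (x : K) {n : ℕ} (hn : n ≤ 2) :
    coeSubmodule K (Ideal.span {a, b}) ≤ span D {x} * coeSubmodule K (maximalIdeal D ^ n) ↔
      coeSubmodule K (maximalIdeal D) ≤ span D {x} * coeSubmodule K (maximalIdeal D ^ n) := by
  refine ⟨fun h ↦ ?_, fun h ↦ le_trans (coeSubmodule_mono K ?_) h⟩
  · have hle : span D {x} * coeSubmodule K (maximalIdeal D ^ n) ≤ span D {x} :=
      (mul_le_mul_right (coeSubmodule_top (R := D) K ▸ coeSubmodule_mono K le_top) _).trans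
        (mul_one _).le
    rw [coeSubmodule_span, span_le, Set.image_pair, Set.insert_subset_iff,
      Set.singleton_subset_iff, SetLike.mem_coe, SetLike.mem_coe] at h
    obtain ⟨hxa, hxb⟩ := h
    obtain ⟨c, hcx⟩ := exists_mul_eq_one_of_mem_span_singleton ha hab (hle hxa) (hle hxb)
    intro y hy
    obtain ⟨m, hm, rfl⟩ := (mem_coeSubmodule K _).1 hy
    rw [mem_span_singleton_mul_iff_of_mul_eq_one hcx, ← map_mul,
      IsFractionRing.algebraMap_mem_coeSubmodule_iff] at hxa ⊢
    exact IsLocalRing.mul_mem_maximalIdeal_pow hn ha2 hxa hm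
  · rw [Ideal.span_le, Set.insert_subset_iff, Set.singleton_subset_iff]
    exact ⟨(mem_maximalIdeal _).2 ha.not_isUnit, hb⟩

end

/- The `Algebra D K` instance found here is Mathlib's `Algebra (Localization.AtPrime P)
(FractionRing S)` with `S = D`, not the canonical one of `FractionRing D`; the two agree. -/
theorem instAlgebraAtPrimeFractionRing_eq :
    (instAlgebraAtPrimeFractionRing (bigD k) : Algebra (bigD k) (bigK k)) =
      OreLocalization.instAlgebra :=
  Algebra.algebra_ext _ _ fun d ↦ DFunLike.congr_fun (IsLocalization.ringHom_ext
    (bigN k).primeCompl (RingHom.ext fun _ ↦ (IsLocalization.lift_eq _ _).trans rfl)) d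

instance : IsFractionRing (bigD k) (bigK k) :=
  (instAlgebraAtPrimeFractionRing_eq k).symm ▸ Localization.isLocalization

lemma disjoint_primeCompl_span_X (i : ℕ) :
    Disjoint ((bigN k).primeCompl : Set (MvPolynomial ℕ k))
      (Ideal.span {X i} : Ideal (MvPolynomial ℕ k)) :=
  Set.disjoint_left.2 fun _ hs hX ↦
    hs ((Ideal.span_singleton_le_iff_mem _).2 (Ideal.subset_span (Set.mem_range_self i)) hX)

lemma prime_algebraMap_X (i : ℕ) : Prime (algebraMap (MvPolynomial ℕ k) (bigD k) (X i)) :=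
  prime_algebraMap_of_prime _ X_prime (disjoint_primeCompl_span_X k i)

lemma algebraMap_X_dvd_algebraMap_X_iff {i j : ℕ} :
    algebraMap (MvPolynomial ℕ k) (bigD k) (X i) ∣ algebraMap (MvPolynomial ℕ k) (bigD k) (X j) ↔
      i = j := by
  rw [algebraMap_dvd_algebraMap_iff_of_prime _ X_prime (disjoint_primeCompl_span_X k i), X_dvd_X]

lemma algebraMap_X_mem_maximalIdeal (i : ℕ) :
    algebraMap (MvPolynomial ℕ k) (bigD k) (X i) ∈ maximalIdeal (bigD k) :=
  (IsLocalization.AtPrime.to_map_mem_maximal_iff _ (bigN k) _).2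
    (Ideal.subset_span (Set.mem_range_self i))

lemma algebraMap_X_notMem_maximalIdeal_sq (i : ℕ) :
    algebraMap (MvPolynomial ℕ k) (bigD k) (X i) ∉ maximalIdeal (bigD k) ^ 2 := by
  rw [← Localization.AtPrime.map_eq_maximalIdeal, ← Ideal.map_pow,
    algebraMap_mem_map_algebraMap_iff (bigN k).primeCompl]
  rintro ⟨s, hs, hsX⟩
  have hcoeff := (mem_pow_idealOfVars_iff' 2 _).1 hsX (Finsupp.single i 1) (by simp)
  have h := coeff_X_mul 0 i s
  rw [add_zero] at h
  rw [mul_comm, h, ← constantCoeff_eq] at hcoeff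
  exact hs (bigN_eq_ker k ▸ RingHom.mem_ker.2 hcoeff)

lemma coe_bigMF_pow (n : ℕ) : (bigMF k : Submodule (bigD k) (bigK k)) ^ n =
    coeSubmodule (bigK k) (maximalIdeal (bigD k) ^ n) := by
  rw [← FractionalIdeal.coe_pow, bigMF, bigM, ← FractionalIdeal.coeIdeal_pow,
    FractionalIdeal.coe_coeIdeal]

lemma exists_eq_span_singleton_mul_of_mem_Jset {J : Submodule (bigD k) (bigK k)}
    (hJ : J ∈ Jset k) :
    ∃ x : bigK k, ∃ n ≤ 2, J = span (bigD k) {x} * (bigMF k : Submodule (bigD k) (bigK k)) ^ n := by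
  obtain ⟨x, -, rfl | rfl | rfl⟩ := hJ
  exacts [⟨x, 0, by norm_num, by rw [pow_zero, mul_one]⟩, ⟨x, 1, by norm_num, by rw [pow_one]⟩,
    ⟨x, 2, le_rfl, rfl⟩]

lemma bigMF_mem_Jset : (bigMF k : Submodule (bigD k) (bigK k)) ∈ Jset k :=
  ⟨1, one_ne_zero, Or.inr (Or.inl (by rw [← one_eq_span, one_mul]))⟩

lemma span_X_one_X_two_le_iff {J : Submodule (bigD k) (bigK k)} (hJ : J ∈ Jset k) :
    (((Ideal.span {algebraMap (MvPolynomial ℕ k) (bigD k) (X 1),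
          algebraMap (MvPolynomial ℕ k) (bigD k) (X 2)} : Ideal (bigD k)) :
            FractionalIdeal (nonZeroDivisors (bigD k)) (bigK k)) :
              Submodule (bigD k) (bigK k)) ≤ J ↔
      (bigMF k : Submodule (bigD k) (bigK k)) ≤ J := by
  obtain ⟨x, n, hn, rfl⟩ := exists_eq_span_singleton_mul_of_mem_Jset k hJ
  rw [coe_bigMF_pow, bigMF, bigM, FractionalIdeal.coe_coeIdeal, FractionalIdeal.coe_coeIdeal]
  exact coeSubmodule_span_pair_le_iff_maximalIdeal_le (prime_algebraMap_X k 1)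
    (by rw [algebraMap_X_dvd_algebraMap_X_iff]; omega) (algebraMap_X_notMem_maximalIdeal_sq k 1)
    (algebraMap_X_mem_maximalIdeal k 2) x hn

/-- For the ideal `I = (X_1, X_2)D` of `D`, `I^∗ = M` where
`E^∗ := ⋂ {J ∈ 𝒥 : E ⊆ J}`. -/
theorem starJ_I_eq_M :
    starJ k (((Ideal.span {algebraMap (MvPolynomial ℕ k) (bigD k) (X 1),
          algebraMap (MvPolynomial ℕ k) (bigD k) (X 2)} : Ideal (bigD k)) :
            FractionalIdeal (nonZeroDivisors (bigD k)) (bigK k)) :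
              Submodule (bigD k) (bigK k)) =
      (bigMF k : Submodule (bigD k) (bigK k)) := by
  rw [starJ, Set.ext fun J ↦ and_congr_right (span_X_one_X_two_le_iff k)]
  exact le_antisymm (sInf_le ⟨bigMF_mem_Jset k, le_rfl⟩) (le_sInf fun J hJ ↦ hJ.2)
end
end

section
/- For every nonzero y ∈ K, the fractional ideal yM of D is a b-ideal: (yM)^b = yM, i.e., ⋂_V (yM)V = yM, where the intersection runs over all valuation overrings V of D. -/
/-!
If `z ∈ (yM)^b`, then for every valuation overring `V` we have `(yM)V ⊆ yV`, so `y⁻¹z` lies in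
every valuation overring of `D`; as `D` is integrally closed (a localization of the UFD
`k[X_1, X_2, ...]`), `y⁻¹z ∈ D`. Testing against a valuation ring `V₀` dominating `D` gives
`(yM)V₀ ⊆ y·𝔪(V₀)`, so `y⁻¹z ∈ 𝔪(V₀) ∩ D = M`.
-/

open MvPolynomial FractionalIdeal

noncomputable section

variable (k : Type*) [Field k]

open Pointwise

attribute [local instance 2000] Algebra.toModule

/-- The `b`-operation: `E^b = ⋂ EV`, the intersection over all valuation overrings `V` of `D`
of the `V`-submodule of `K` generated by `E` (viewed as a `D`-submodule of `K`). -/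
def bOp (E : Submodule (bigD k) (bigK k)) : Submodule (bigD k) (bigK k) :=
  sInf {J | ∃ V : ValuationSubring (bigK k),
    (∀ d : bigD k, algebraMap (bigD k) (bigK k) d ∈ V) ∧
    J = Submodule.span (bigD k) ((E : Set (bigK k)) * (V : Set (bigK k)))}

/-- The set `𝒮` of all fractional ideals of `D` of the form `xF^b` (with `x ∈ K` nonzero and
`F` a finitely generated nonzero fractional ideal of `D`) or `yM` (with `y ∈ K` nonzero),
viewed as `D`-submodules of `K`. -/
def Sset : Set (Submodule (bigD k) (bigK k)) :=
  {J | (∃ x : bigK k, x ≠ 0 ∧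
          ∃ F : FractionalIdeal (nonZeroDivisors (bigD k)) (bigK k), F ≠ 0 ∧
            (F : Submodule (bigD k) (bigK k)).FG ∧
            J = Submodule.span (bigD k) {x} * bOp k (F : Submodule (bigD k) (bigK k))) ∨
       (∃ y : bigK k, y ≠ 0 ∧
          J = Submodule.span (bigD k) {y} * (bigMF k : Submodule (bigD k) (bigK k)))}

/-- The operation `E^⋆ := ⋂ {J ∈ 𝒮 : E ⊆ J}`. -/
def starS (E : Submodule (bigD k) (bigK k)) : Submodule (bigD k) (bigK k) :=
  sInf {J | J ∈ Sset k ∧ E ≤ J}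

section ValuationBounds

variable {R K Γ₀ : Type*} [CommRing R] [CommRing K] [Algebra R K]
  [LinearOrderedCommGroupWithZero Γ₀]

theorem Valuation.map_le_of_mem_span (v : Valuation K Γ₀)
    (hR : ∀ r, v (algebraMap R K r) ≤ 1) {s : Set K} {γ : Γ₀} (hs : ∀ x ∈ s, v x ≤ γ)
    {x : K} (hx : x ∈ Submodule.span R s) : v x ≤ γ := by
  induction hx using Submodule.span_induction with
  | mem x hx => exact hs x hx
  | zero => simp
  | add a b _ _ ha hb => exact (v.map_add a b).trans (max_le ha hb)
  | smul r a _ ha =>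
    rw [Algebra.smul_def, v.map_mul]
    exact mul_le_of_le_one_of_le (hR r) ha

theorem Valuation.map_lt_of_mem_span (v : Valuation K Γ₀)
    (hR : ∀ r, v (algebraMap R K r) ≤ 1) {s : Set K} {γ : Γ₀} (hγ : γ ≠ 0)
    (hs : ∀ x ∈ s, v x < γ) {x : K} (hx : x ∈ Submodule.span R s) : v x < γ := by
  induction hx using Submodule.span_induction with
  | mem x hx => exact hs x hx
  | zero => simpa [zero_lt_iff] using hγ
  | add a b _ _ ha hb => exact (v.map_add a b).trans_lt (max_lt ha hb)
  | smul r a _ ha =>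
    rw [Algebra.smul_def, v.map_mul]
    exact mul_lt_of_le_one_of_lt (hR r) ha

end ValuationBounds

namespace ValuationSubring

variable {R K : Type*} [CommRing R] [Field K] [Algebra R K] (V : ValuationSubring K)

theorem valuation_le_of_mem_span_mul (hR : ∀ r, algebraMap R K r ∈ V)
    {N : Submodule R K} (hN : ∀ n ∈ N, V.valuation n ≤ 1) {y z : K}
    (hz : z ∈ Submodule.span R
      (((Submodule.span R {y} * N : Submodule R K) : Set K) * (V : Set K))) :
    V.valuation z ≤ V.valuation y := by
  refine V.valuation.map_le_of_mem_span (fun r => (V.valuation_le_one_iff _).mpr (hR r)) ?_ hz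
  rintro _ ⟨e, he, u, hu, rfl⟩
  obtain ⟨n, hn, rfl⟩ := Submodule.mem_span_singleton_mul.mp he
  calc V.valuation (y * n * u) = V.valuation y * V.valuation n * V.valuation u := by
        simp only [map_mul]
    _ ≤ V.valuation y * 1 * 1 := by
        gcongr
        exacts [hN n hn, (V.valuation_le_one_iff u).mpr hu]
    _ = V.valuation y := by rw [mul_one, mul_one]

theorem valuation_lt_of_mem_span_mul (hR : ∀ r, algebraMap R K r ∈ V)
    {N : Submodule R K} (hN : ∀ n ∈ N, V.valuation n < 1) {y z : K} (hy : y ≠ 0)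
    (hz : z ∈ Submodule.span R
      (((Submodule.span R {y} * N : Submodule R K) : Set K) * (V : Set K))) :
    V.valuation z < V.valuation y := by
  have hvy : V.valuation y ≠ 0 := (Valuation.ne_zero_iff _).mpr hy
  refine V.valuation.map_lt_of_mem_span (fun r => (V.valuation_le_one_iff _).mpr (hR r)) hvy ?_ hz
  rintro _ ⟨e, he, u, hu, rfl⟩
  obtain ⟨n, hn, rfl⟩ := Submodule.mem_span_singleton_mul.mp he
  calc V.valuation (y * n * u) = V.valuation y * V.valuation n * V.valuation u := by
        simp only [map_mul]
    _ ≤ V.valuation y * V.valuation n :=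
        mul_le_of_le_one_right' ((V.valuation_le_one_iff u).mpr hu)
    _ < V.valuation y * 1 := mul_lt_mul_of_pos_left (hN n hn) (zero_lt_iff.mpr hvy)
    _ = V.valuation y := mul_one _

end ValuationSubring

theorem IsLocalRing.exists_valuationSubring_dominating {R K : Type*} [CommRing R] [IsLocalRing R]
    [Field K] [Algebra R K] :
    ∃ V : ValuationSubring K, (∀ r, algebraMap R K r ∈ V) ∧
      ∀ r, V.valuation (algebraMap R K r) < 1 ↔ r ∈ IsLocalRing.maximalIdeal R := by
  obtain ⟨V, hR, hloc⟩ := IsLocalRing.exists_factor_valuationRing (algebraMap R K)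
  refine ⟨V, hR, fun r => ?_⟩
  rw [IsLocalRing.mem_maximalIdeal, mem_nonunits_iff,
    ← isUnit_map_iff ((algebraMap R K).codRestrict V.toSubring hR) r]
  exact (V.valuation_lt_one_iff ⟨_, hR r⟩).symm

theorem IsIntegrallyClosed.mem_range_of_forall_mem_valuationSubring {R K : Type*} [CommRing R]
    [IsDomain R] [IsIntegrallyClosed R] [Field K] [Algebra R K] [IsFractionRing R K] {x : K}
    (hx : ∀ V : ValuationSubring K, (∀ r, algebraMap R K r ∈ V) → x ∈ V) :
    x ∈ (algebraMap R K).range := by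
  let φ : R ≃+* (algebraMap R K).range := RingEquiv.ofBijective (algebraMap R K).rangeRestrict
    ⟨((algebraMap R K).injective_codRestrict).mpr (IsFractionRing.injective R K),
      (algebraMap R K).rangeRestrict_surjective⟩
  have : IsIntegrallyClosedIn (algebraMap R K).range K :=
    Subring.isIntegrallyClosedIn_iff.mpr fun x hx =>
      IsIntegrallyClosed.isIntegral_iff.mp ((φ.isIntegral_iff rfl x).mpr hx)
  by_contra hxR
  obtain ⟨V, hRV, hxV⟩ := Subring.exists_le_valuationSubring_of_isIntegrallyClosedIn hxR
  exact hxV (hx V fun r => hRV ⟨r, rfl⟩)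

instance : IsIntegrallyClosed (bigD k) :=
  isIntegrallyClosed_of_isLocalization _ _ (bigN k).primeCompl_le_nonZeroDivisors

-- `Algebra (bigD k) (bigK k)` is found via `instAlgebraAtPrimeFractionRing`, not the
-- `OreLocalization` algebra; the two agree only up to unfolding, so this instance is not
-- inferred automatically.
instance inst_s17 : IsFractionRing (bigD k) (bigK k) := by
  convert Localization.isLocalization (M := nonZeroDivisors (bigD k)) using 2
  refine Algebra.algebra_ext _ _ (RingHom.congr_fun ?_)
  refine IsLocalization.ringHom_ext (bigN k).primeCompl (RingHom.ext fun p => ?_)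
  simp only [RingHom.comp_apply, RingHom.algebraMap_toAlgebra, IsLocalization.lift_eq]
  rfl

theorem le_bOp (E : Submodule (bigD k) (bigK k)) : E ≤ bOp k E :=
  le_sInf fun _ ⟨V, _, hJ⟩ e he => hJ ▸ Submodule.subset_span ⟨e, he, 1, V.one_mem, mul_one e⟩

theorem mem_span_mul_of_mem_bOp {E : Submodule (bigD k) (bigK k)} {z : bigK k}
    (hz : z ∈ bOp k E) (V : ValuationSubring (bigK k))
    (hV : ∀ d, algebraMap (bigD k) (bigK k) d ∈ V) :
    z ∈ Submodule.span (bigD k) ((E : Set (bigK k)) * (V : Set (bigK k))) :=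
  Submodule.mem_sInf.mp hz _ ⟨V, hV, rfl⟩

/-- For every nonzero `y ∈ K`, the fractional ideal `yM` of `D` is a `b`-ideal:
`(yM)^b = yM`. -/
theorem bOp_yM (y : bigK k) (hy : y ≠ 0) :
    bOp k (Submodule.span (bigD k) {y} * (bigMF k : Submodule (bigD k) (bigK k))) =
      Submodule.span (bigD k) {y} * (bigMF k : Submodule (bigD k) (bigK k)) := by
  refine le_antisymm (fun z hz => ?_) (le_bOp k _)
  obtain ⟨d, hd⟩ : y⁻¹ * z ∈ (algebraMap (bigD k) (bigK k)).range := by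
    refine IsIntegrallyClosed.mem_range_of_forall_mem_valuationSubring fun V hV => ?_
    have hM : ∀ n ∈ (bigMF k : Submodule (bigD k) (bigK k)), V.valuation n ≤ 1 := by
      rintro _ ⟨m, -, rfl⟩
      exact (V.valuation_le_one_iff _).mpr (hV m)
    rw [← V.valuation_le_one_iff, map_mul, map_inv₀, inv_mul_le_one₀ (V.valuation.pos_iff.mpr hy)]
    exact V.valuation_le_of_mem_span_mul hV hM (mem_span_mul_of_mem_bOp k hz V hV)
  obtain ⟨V₀, hV₀, hV₀M⟩ :=
    IsLocalRing.exists_valuationSubring_dominating (R := bigD k) (K := bigK k)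
  have hM₀ : ∀ n ∈ (bigMF k : Submodule (bigD k) (bigK k)), V₀.valuation n < 1 := by
    rintro _ ⟨m, hm, rfl⟩
    exact (hV₀M m).mpr hm
  have hdM : d ∈ bigM k := by
    refine (hV₀M d).mp ?_
    rw [hd, map_mul, map_inv₀, inv_mul_lt_one₀ (V₀.valuation.pos_iff.mpr hy)]
    exact V₀.valuation_lt_of_mem_span_mul hV₀ hM₀ hy (mem_span_mul_of_mem_bOp k hz V₀ hV₀)
  rw [← mul_inv_cancel_left₀ hy z, ← hd]
  exact Submodule.mul_mem_mul (Submodule.mem_span_singleton_self y) ⟨d, hdM, rfl⟩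
end
end
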